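/- arXiv:1602.06094 — 4 statements merged into one kernel-verified Lean document; each statement's English description precedes it below -/
import Mathlib

section
/- Let R be a domain that is an elementary divisor ring. Then the following are equivalent: (1) R is a Bézout duo-domain (i.e., R is a duo ring); (2) R satisfies the Lam condition, i.e., RaR = R implies a is a unit; (3) for every a ∈ R, RaR = R implies there exist s, t ∈ R such that sat = 1. -/
/-- A (not necessarily square) matrix `A` over a ring admits diagonal reduction if there are
invertible matrices `P`, `Q` such that `P * A * Q` is a diagonal matrix `(d_ij)` in which each
diagonal entry `d_{i+1,i+1}` is a full divisor of `d_ii`, i.e.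
`R·d_{i+1,i+1}·R ⊆ d_ii·R ∩ R·d_ii`. -/
def AdmitsDiagonalReduction {R : Type*} [Ring R] {m n : ℕ}
    (A : Matrix (Fin m) (Fin n) R) : Prop :=
  ∃ (P : Matrix (Fin m) (Fin m) R) (Q : Matrix (Fin n) (Fin n) R),
    IsUnit P ∧ IsUnit Q ∧
    (∀ (i : Fin m) (j : Fin n), (i : ℕ) ≠ (j : ℕ) → (P * A * Q) i j = 0) ∧
    (∀ (i : Fin m) (j : Fin n) (i' : Fin m) (j' : Fin n),
      (i : ℕ) = (j : ℕ) → (i' : ℕ) = (j' : ℕ) → (i' : ℕ) = (i : ℕ) + 1 →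
      ∀ x y : R,
        (∃ u : R, x * (P * A * Q) i' j' * y = (P * A * Q) i j * u) ∧
        (∃ v : R, x * (P * A * Q) i' j' * y = v * (P * A * Q) i j))

/-- A ring is an elementary divisor ring if every matrix admits a diagonal reduction. -/
def ElementaryDivisorRing (R : Type*) [Ring R] : Prop :=
  ∀ (m n : ℕ) (A : Matrix (Fin m) (Fin n) R), AdmitsDiagonalReduction A

/-- A ring is Bézout if every finitely generated left ideal and every finitely generated
right ideal is principal. (Right ideals are submodules of `R` over `Rᵐᵒᵖ`.) -/
def IsBezoutRing (R : Type*) [Ring R] : Prop :=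
  (∀ I : Ideal R, I.FG → ∃ d : R, I = Ideal.span {d}) ∧
  (∀ I : Submodule Rᵐᵒᵖ R, I.FG → ∃ d : R, I = Submodule.span Rᵐᵒᵖ {d})

/-- A ring is duo if every left ideal and every right ideal is two-sided. -/
def IsDuoRing (R : Type*) [Ring R] : Prop :=
  (∀ (I : Ideal R), ∀ a ∈ I, ∀ r : R, a * r ∈ I) ∧
  (∀ (I : Submodule Rᵐᵒᵖ R), ∀ a ∈ I, ∀ r : R, r * a ∈ I)

/-- A ring is left quasi-duo if every maximal left ideal is two-sided. -/
def IsLeftQuasiDuo (R : Type*) [Ring R] : Prop :=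
  ∀ I : Ideal R, I.IsMaximal → ∀ a ∈ I, ∀ r : R, a * r ∈ I

/-- A ring is right quasi-duo if every maximal right ideal is two-sided. -/
def IsRightQuasiDuo (R : Type*) [Ring R] : Prop :=
  ∀ I : Submodule Rᵐᵒᵖ R, IsCoatom I → ∀ a ∈ I, ∀ r : R, r * a ∈ I

/-- A ring has stable range 1 if `aR + bR = R` implies `a + by` is a unit for some `y`. -/
def HasStableRange1 (R : Type*) [Ring R] : Prop :=
  ∀ a b : R, (∃ x y : R, a * x + b * y = 1) → ∃ y : R, IsUnit (a + b * y)

/-- The quotient ring `R/aR`, where `aR` is regarded as the two-sided ideal generated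
by `a` (in a duo ring this coincides with the right ideal `aR`). -/
abbrev QuotBy {R : Type*} [Ring R] (a : R) : Type _ :=
  (TwoSidedIdeal.span {a}).ringCon.Quotient

/-- The Jacobson radical of `R` (the intersection of all maximal left ideals). -/
noncomputable abbrev jacobsonRadical (R : Type*) [Ring R] : Ideal R :=
  Ideal.jacobson (⊥ : Ideal R)

/-- A two-sided ideal `P` is prime if `P ≠ R` and `aRb ⊆ P` implies `a ∈ P` or `b ∈ P`. -/
def IsPrimeTwoSided {R : Type*} [Ring R] (P : TwoSidedIdeal R) : Prop :=
  P ≠ ⊤ ∧ ∀ a b : R, (∀ r : R, a * r * b ∈ P) → a ∈ P ∨ b ∈ P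

/-- A ring is a PM ring if every prime two-sided ideal is contained in exactly one
maximal (two-sided) ideal. -/
def IsPMRing (R : Type*) [Ring R] : Prop :=
  ∀ P : TwoSidedIdeal R, IsPrimeTwoSided P →
    ∃! M : TwoSidedIdeal R, IsCoatom M ∧ P ≤ M

/-- An element `c` is adequate if for every `a` there are `r, s` with `c = rs`,
`rR + aR = R`, and `s'R + aR ≠ R` for every non-invertible divisor `s'` of `s`. -/
def IsAdequateElement {R : Type*} [Ring R] (c : R) : Prop :=
  ∀ a : R, ∃ r s : R, c = r * s ∧ (∃ x y : R, r * x + a * y = 1) ∧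
    ∀ s' : R, ¬ IsUnit s' → (∃ u : R, s = s' * u) → ¬ ∃ x y : R, s' * x + a * y = 1

/-- An element `c` is feckly adequate if for every `a` there are `r, s` with
`c ≡ rs (mod J(R))`, `rR + aR = R`, and `s'R + aR ≠ R` for every non-invertible
divisor `s'` of `s`. -/
def IsFecklyAdequateElement {R : Type*} [Ring R] (c : R) : Prop :=
  ∀ a : R, ∃ r s : R, c - r * s ∈ jacobsonRadical R ∧ (∃ x y : R, r * x + a * y = 1) ∧
    ∀ s' : R, ¬ IsUnit s' → (∃ u : R, s = s' * u) → ¬ ∃ x y : R, s' * x + a * y = 1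

/-!
Diagonalising the matrices `[α β]` and `[α; β]` shows that in an elementary divisor ring any
two elements generate a principal right and a principal left ideal, so `R` is Bézout.

Under the Lam condition, a pair with `γα + δβ = 1` also satisfies `αw₁ + βw₂ = 1`: its right
gcd `c` has `RcR = R`, hence is a unit. Now write `diag(a, a) = P⁻¹ diag(d₀, d₁) Q⁻¹` with
`Rd₁R ⊆ d₀R`. The row `(P₁₀, P₁₁)` of `P` becomes left unimodular and the column
`(P⁻¹₀₀, P⁻¹₁₀)` of `P⁻¹` right unimodular, and these give `Ra ⊆ Rd₁R ⊆ aR`. By symmetry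
`aR ⊆ Ra`, so `R` is duo. The mirror-image statements come from `Rᵐᵒᵖ`, which is again an
elementary divisor ring.

Conversely, in a duo ring `RaR = R` forces `Ra = aR = R`. In a domain one-sided inverses are
two-sided, so `sat = 1` already makes `a` a unit.
-/

def LamCondition (R : Type*) [Ring R] : Prop :=
  ∀ a : R, TwoSidedIdeal.span {a} = ⊤ → IsUnit a

section
variable {R : Type*} [Ring R]
open Matrix

theorem TwoSidedIdeal.span_singleton_eq_top_of_mul_add_mul_eq_one {g p q r s : R}
    (h : p * g * q + r * g * s = 1) : TwoSidedIdeal.span {g} = ⊤ := by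
  have hg : g ∈ TwoSidedIdeal.span {g} := TwoSidedIdeal.subset_span rfl
  refine TwoSidedIdeal.eq_top _ (h ▸ (TwoSidedIdeal.span {g}).add_mem ?_ ?_) <;>
    exact TwoSidedIdeal.mul_mem_right _ _ _ (TwoSidedIdeal.mul_mem_left _ _ _ hg)

theorem LamCondition.op (h : LamCondition R) : LamCondition Rᵐᵒᵖ := by
  intro a ha
  have hle : TwoSidedIdeal.span {a} ≤ (TwoSidedIdeal.span {a.unop}).op :=
    TwoSidedIdeal.span_le.2 <| by
      simpa [TwoSidedIdeal.mem_op_iff] using TwoSidedIdeal.subset_span (s := {a.unop}) rfl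
  have h1 : (1 : R) ∈ TwoSidedIdeal.span {a.unop} :=
    TwoSidedIdeal.mem_op_iff.1 (hle (ha ▸ TwoSidedIdeal.mem_top _))
  exact (h _ (TwoSidedIdeal.eq_top _ h1)).op

theorem IsDuoRing.lamCondition (h : IsDuoRing R) : LamCondition R := by
  intro a ha
  have : (Ideal.span {a}).IsTwoSided := ⟨fun b hx => h.1 _ _ hx b⟩
  let J : TwoSidedIdeal R := .mk' (Submodule.span Rᵐᵒᵖ {a}) (zero_mem _) add_mem neg_mem
    (fun hy => h.2 _ _ hy _) (fun {_ y} hx => Submodule.smul_mem _ (MulOpposite.op y) hx)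
  have hone : (1 : R) ∈ TwoSidedIdeal.span {a} := by rw [ha]; trivial
  have hleft : (1 : R) ∈ (Ideal.span {a}).toTwoSided := TwoSidedIdeal.span_le.2 (by simp) hone
  have hright : (1 : R) ∈ J := TwoSidedIdeal.span_le.2 (by simp [J]) hone
  obtain ⟨r, hr⟩ := Ideal.mem_span_singleton'.1 (Ideal.mem_toTwoSided.1 hleft)
  obtain ⟨s, hs⟩ := Submodule.mem_span_singleton.1 ((TwoSidedIdeal.mem_mk' ..).1 hright)
  change a * s.unop = 1 at hs
  exact ⟨⟨a, r, left_inv_eq_right_inv hr hs ▸ hs, hr⟩, rfl⟩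

theorem ElementaryDivisorRing.op (h : ElementaryDivisorRing R) :
    ElementaryDivisorRing Rᵐᵒᵖ := by
  intro m n A
  obtain ⟨P, Q, hP, hQ, hdiag, hdiv⟩ := h n m (Aᵀ.map MulOpposite.unop)
  have hD : Qᵀ.map MulOpposite.op * A * Pᵀ.map MulOpposite.op =
      (P * Aᵀ.map MulOpposite.unop * Q)ᵀ.map MulOpposite.op := by
    ext i j
    apply MulOpposite.unop_injective
    simp only [mul_apply, map_apply, transpose_apply, Finset.unop_sum, MulOpposite.unop_mul,
      MulOpposite.unop_op, Finset.sum_mul, mul_assoc]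
    exact Finset.sum_comm
  refine ⟨_, _, by simpa using hQ.op.map RingEquiv.mopMatrix.symm,
    by simpa using hP.op.map RingEquiv.mopMatrix.symm, fun i j hij => ?_,
    fun i j i' j' hij hij' hi x y => ?_⟩ <;> simp only [hD, map_apply, transpose_apply]
  · rw [hdiag j i (Ne.symm hij), MulOpposite.op_zero]
  · obtain ⟨⟨u, hu⟩, ⟨v, hv⟩⟩ :=
      hdiv j i j' i' hij.symm hij'.symm (by omega) (MulOpposite.unop y) (MulOpposite.unop x)
    refine ⟨⟨MulOpposite.op v, ?_⟩, ⟨MulOpposite.op u, ?_⟩⟩ <;> apply MulOpposite.unop_injective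
    · simpa [mul_assoc] using hv
    · simpa [mul_assoc] using hu

theorem ElementaryDivisorRing.exists_right_gcd (h : ElementaryDivisorRing R) (α β : R) :
    ∃ c x y x' y', α = c * x ∧ β = c * y ∧ c = α * x' + β * y' := by
  obtain ⟨P, Q, hP, hQ, hdiag, -⟩ := h 1 2 !![α, β]
  obtain ⟨P', hP'P⟩ := hP.exists_left_inv
  obtain ⟨Q', hQQ'⟩ := hQ.exists_right_inv
  set M := !![α, β] * Q with hM
  have hMP : M = P' * (P * !![α, β] * Q) := by
    rw [← Matrix.mul_assoc, ← Matrix.mul_assoc, hP'P, Matrix.one_mul]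
  have hM01 : M 0 1 = 0 := by
    rw [hMP, mul_apply, Fin.sum_univ_one, hdiag 0 1 (by decide), mul_zero]
  have hA : !![α, β] = M * Q' := by rw [hM, Matrix.mul_assoc, hQQ', Matrix.mul_one]
  refine ⟨M 0 0, Q' 0 0, Q' 0 1, Q 0 0, Q 1 0, ?_, ?_, ?_⟩
  · simpa [mul_apply, Fin.sum_univ_two, hM01] using congrFun (congrFun hA 0) 0
  · simpa [mul_apply, Fin.sum_univ_two, hM01] using congrFun (congrFun hA 0) 1
  · simp [hM, vecMul, dotProduct, Fin.sum_univ_two]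

theorem ElementaryDivisorRing.exists_left_gcd (h : ElementaryDivisorRing R) (α β : R) :
    ∃ c x y x' y', α = x * c ∧ β = y * c ∧ c = x' * α + y' * β := by
  obtain ⟨c, x, y, x', y', hα, hβ, hc⟩ :=
    h.op.exists_right_gcd (MulOpposite.op α) (MulOpposite.op β)
  exact ⟨c.unop, x.unop, y.unop, x'.unop, y'.unop, congrArg MulOpposite.unop hα,
    congrArg MulOpposite.unop hβ, congrArg MulOpposite.unop hc⟩

theorem Submodule.exists_eq_span_singleton_of_fg {S M : Type*} [Semiring S] [AddCommMonoid M]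
    [Module S M] (h : ∀ x y : M, ∃ c, span S {x, y} = span S {c}) {N : Submodule S M}
    (hN : N.FG) : ∃ c, N = span S {c} := by
  induction N, hN using Submodule.fg_induction with
  | singleton x => exact ⟨x, rfl⟩
  | sup N₁ N₂ _ _ ih₁ ih₂ =>
    obtain ⟨⟨x, rfl⟩, ⟨y, rfl⟩⟩ := And.intro ih₁ ih₂
    rw [← span_insert]
    exact h x y

theorem ElementaryDivisorRing.isBezoutRing (h : ElementaryDivisorRing R) : IsBezoutRing R := by
  refine ⟨fun I hI => Submodule.exists_eq_span_singleton_of_fg (fun α β => ?_) hI,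
    fun I hI => Submodule.exists_eq_span_singleton_of_fg (fun α β => ?_) hI⟩
  · obtain ⟨c, x, y, x', y', hα, hβ, hc⟩ := h.exists_left_gcd α β
    refine ⟨c, le_antisymm (Submodule.span_le.2 ?_)
      ((Submodule.span_singleton_le_iff_mem _ _).2 (Submodule.mem_span_pair.2 ⟨x', y', hc.symm⟩))⟩
    rintro _ (rfl | rfl)
    exacts [Ideal.mem_span_singleton'.2 ⟨x, hα.symm⟩, Ideal.mem_span_singleton'.2 ⟨y, hβ.symm⟩]
  · obtain ⟨c, x, y, x', y', hα, hβ, hc⟩ := h.exists_right_gcd α β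
    refine ⟨c, le_antisymm (Submodule.span_le.2 ?_)
      ((Submodule.span_singleton_le_iff_mem _ _).2
        (Submodule.mem_span_pair.2 ⟨MulOpposite.op x', MulOpposite.op y', hc.symm⟩))⟩
    rintro _ (rfl | rfl)
    exacts [Submodule.mem_span_singleton.2 ⟨MulOpposite.op x, hα.symm⟩,
      Submodule.mem_span_singleton.2 ⟨MulOpposite.op y, hβ.symm⟩]

theorem ElementaryDivisorRing.exists_right_combination_eq_one (h : ElementaryDivisorRing R)
    (hLam : LamCondition R) {α β γ δ : R} (hγδ : γ * α + δ * β = 1) :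
    ∃ w₁ w₂, α * w₁ + β * w₂ = 1 := by
  obtain ⟨c, x, y, x', y', rfl, rfl, hc⟩ := h.exists_right_gcd α β
  obtain ⟨u, rfl⟩ := hLam c <| TwoSidedIdeal.span_singleton_eq_top_of_mul_add_mul_eq_one
    (p := γ) (q := x) (r := δ) (s := y) (by simpa only [mul_assoc] using hγδ)
  exact ⟨x' * ↑u⁻¹, y' * ↑u⁻¹, by rw [← mul_assoc, ← mul_assoc, ← add_mul, ← hc, u.mul_inv]⟩

theorem ElementaryDivisorRing.exists_left_combination_eq_one (h : ElementaryDivisorRing R)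
    (hLam : LamCondition R) {α β γ δ : R} (hγδ : α * γ + β * δ = 1) :
    ∃ w₁ w₂, w₁ * α + w₂ * β = 1 := by
  obtain ⟨w₁, w₂, hw⟩ := h.op.exists_right_combination_eq_one hLam.op
    (α := MulOpposite.op α) (β := MulOpposite.op β) (γ := MulOpposite.op γ)
    (δ := MulOpposite.op δ) (congrArg MulOpposite.op hγδ)
  exact ⟨w₁.unop, w₂.unop, congrArg MulOpposite.unop hw⟩

theorem ElementaryDivisorRing.exists_diagonal_two (h : ElementaryDivisorRing R)
    (A : Matrix (Fin 2) (Fin 2) R) :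
    ∃ (P Q : (Matrix (Fin 2) (Fin 2) R)ˣ) (d : Fin 2 → R),
      (P : Matrix (Fin 2) (Fin 2) R) * A * Q = diagonal d ∧ ∀ x, d 0 ∣ x * d 1 := by
  obtain ⟨P, Q, ⟨P, rfl⟩, ⟨Q, rfl⟩, hdiag, hdiv⟩ := h 2 2 A
  refine ⟨P, Q, fun i => (P * A * Q : Matrix (Fin 2) (Fin 2) R) i i, ?_, fun x => ?_⟩
  · ext i j
    fin_cases i <;> fin_cases j <;> simp [hdiag]
  · obtain ⟨⟨u, hu⟩, -⟩ := hdiv 0 0 1 1 rfl rfl rfl x 1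
    exact ⟨u, by simpa using hu⟩

/-- The families `p` and `u` witness `Ra ⊆ Rd₁R` and `Rd₁R ⊆ aR` respectively. -/
theorem dvd_mul_left_of_sum_mul_eq_one {ι κ : Type*} [Fintype ι] [Fintype κ] {a d₀ d₁ : R}
    {p σ : ι → R} {u w : κ → R} (hσ : ∑ j, σ j * p j = 1) (hw : ∑ i, u i * w i = 1)
    (hp : ∀ j, d₁ ∣ p j * a) (hu : ∀ i, a ∣ u i * d₀) (hd : ∀ x, d₀ ∣ x * d₁) (t : R) :
    a ∣ t * a := by
  have hd₁ : ∀ x, a ∣ x * d₁ := by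
    intro x
    rw [← one_mul (x * d₁), ← hw, Finset.sum_mul]
    refine Finset.dvd_sum fun i _ => ?_
    obtain ⟨v, hv⟩ := hd (w i * x)
    rw [mul_assoc, ← mul_assoc (w i), hv, ← mul_assoc]
    exact (hu i).mul_right v
  rw [← mul_one t, ← hσ, Finset.mul_sum, Finset.sum_mul]
  refine Finset.dvd_sum fun j _ => ?_
  obtain ⟨q, hq⟩ := hp j
  rw [mul_assoc, mul_assoc, hq]
  simp only [← mul_assoc]
  exact (hd₁ _).mul_right q

theorem ElementaryDivisorRing.dvd_mul_left (h : ElementaryDivisorRing R)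
    (hLam : LamCondition R) (a t : R) : a ∣ t * a := by
  obtain ⟨⟨P, P', hPP', hP'P⟩, ⟨Q, Q', hQQ', _⟩, d, hD, hd⟩ :=
    h.exists_diagonal_two (diagonal fun _ => a)
  have hPA : P * diagonal (fun _ => a) = diagonal d * Q' := by
    rw [← hD, Matrix.mul_assoc _ Q, hQQ', Matrix.mul_one]
  have hAQ : diagonal (fun _ => a) * Q = P' * diagonal d := by
    rw [← hD, ← Matrix.mul_assoc, ← Matrix.mul_assoc, hP'P, Matrix.one_mul]
  obtain ⟨σ₀, σ₁, hσ⟩ := h.exists_left_combination_eq_one hLam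
    (by simpa [mul_apply, Fin.sum_univ_two] using congrFun (congrFun hPP' 1) 1)
  obtain ⟨w₀, w₁, hw⟩ := h.exists_right_combination_eq_one hLam
    (by simpa [mul_apply, Fin.sum_univ_two] using congrFun (congrFun hPP' 0) 0)
  refine dvd_mul_left_of_sum_mul_eq_one (p := fun j => P 1 j) (σ := ![σ₀, σ₁])
    (u := fun i => P' i 0) (w := ![w₀, w₁]) (by simpa [Fin.sum_univ_two] using hσ)
    (by simpa [Fin.sum_univ_two] using hw) (fun j => ⟨Q' 1 j, ?_⟩) (fun i => ⟨Q i 0, ?_⟩) hd t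
  · simpa using congrFun (congrFun hPA 1) j
  · simpa using (congrFun (congrFun hAQ i) 0).symm

theorem ElementaryDivisorRing.exists_mul_eq_mul_left (h : ElementaryDivisorRing R)
    (hLam : LamCondition R) (a t : R) : ∃ r, a * t = r * a := by
  obtain ⟨r, hr⟩ := h.op.dvd_mul_left hLam.op (MulOpposite.op a) (MulOpposite.op t)
  exact ⟨r.unop, congrArg MulOpposite.unop hr⟩

theorem ElementaryDivisorRing.isDuoRing (h : ElementaryDivisorRing R) (hLam : LamCondition R) :
    IsDuoRing R := by
  refine ⟨fun I a ha r => ?_, fun I a ha r => ?_⟩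
  · obtain ⟨s, hs⟩ := h.exists_mul_eq_mul_left hLam a r
    exact hs ▸ I.smul_mem s ha
  · obtain ⟨s, hs⟩ := h.dvd_mul_left hLam a r
    exact hs ▸ I.smul_mem (MulOpposite.op s) ha

end

/-- For a domain `R` that is an elementary divisor ring, the following are
equivalent: (1) `R` is a Bézout duo-domain; (2) `R` satisfies the Lam condition
(`RaR = R` implies `a` is a unit); (3) `RaR = R` implies `sat = 1` for some `s, t`. -/
theorem stmt2 (R : Type*) [Ring R] [IsDomain R] (hEDR : ElementaryDivisorRing R) :
    List.TFAE
      [IsBezoutRing R ∧ IsDuoRing R,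
       ∀ a : R, TwoSidedIdeal.span {a} = ⊤ → IsUnit a,
       ∀ a : R, TwoSidedIdeal.span {a} = ⊤ → ∃ s t : R, s * a * t = 1] := by
  tfae_have 1 → 2 := fun h => h.2.lamCondition
  tfae_have 2 → 1 := fun h => ⟨hEDR.isBezoutRing, hEDR.isDuoRing h⟩
  tfae_have 2 → 3 := fun h a ha => by
    obtain ⟨u, rfl⟩ := h a ha
    exact ⟨↑u⁻¹, 1, by simp⟩
  tfae_have 3 → 2 := fun h a ha => by
    obtain ⟨s, t, hst⟩ := h a ha
    exact isUnit_of_mul_isUnit_right (isUnit_of_mul_isUnit_left (x := s * a) (hst ▸ isUnit_one))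
  tfae_finish
end

section
/- Let R be a Bézout domain. If p, q ∈ R satisfy pR + qR = R, then there exists an invertible 2×2 matrix over R whose first row is (p, q). -/
/-! The row `(p, q)` has the right inverse `(x, y)ᵀ`, so `R² = (x, y)ᵀR ⊕ K` with `K` the kernel
of `(p, q)`, the image of `1 - (x, y)ᵀ(p, q)`. When `q ≠ 0` the first coordinate maps `K`
injectively onto the right ideal `(1 - xp)R + xqR`, which is principal, say `eR`; hence
`K = (e, f)ᵀR` and `[x e; y f]` is invertible with inverse of first row `(p, q)`.
When `q = 0`, `p` is a unit since domains are Dedekind-finite. -/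
section

variable {R : Type*} [Ring R]

theorem mem_span_op_singleton_iff {e z : R} :
    z ∈ Submodule.span Rᵐᵒᵖ {e} ↔ ∃ c, e * c = z := by
  simp [Submodule.mem_span_singleton, MulOpposite.exists]

theorem IsBezoutRing.exists_right_gcd (hB : IsBezoutRing R) (a b : R) :
    ∃ s t c d : R, a = (a * s + b * t) * c ∧ b = (a * s + b * t) * d := by
  obtain ⟨e, hI⟩ := hB.2 (Submodule.span Rᵐᵒᵖ {a, b}) (Submodule.fg_span (Set.toFinite _))
  have he : e ∈ Submodule.span Rᵐᵒᵖ {a, b} := hI ▸ Submodule.mem_span_singleton_self e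
  obtain ⟨s, t, rfl⟩ := Submodule.mem_span_pair.mp he
  obtain ⟨c, hc⟩ := mem_span_op_singleton_iff.mp (hI ▸ Submodule.subset_span (by simp) : a ∈ _)
  obtain ⟨d, hd⟩ := mem_span_op_singleton_iff.mp (hI ▸ Submodule.subset_span (by simp) : b ∈ _)
  exact ⟨s.unop, t.unop, c, d, hc.symm, hd.symm⟩

theorem isUnit_fin_two_of_right_gcd [IsDomain R] {p q x y s t c d e : R} (hq : q ≠ 0)
    (hxy : p * x + q * y = 1) (he : e = (1 - x * p) * s + x * q * t)
    (hc : 1 - x * p = e * c) (hd : x * q = e * d) :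
    IsUnit !![p, q; c, -d] := by
  -- `(e, f)` is the first column of `(1 - (x, y)ᵀ (p, q)) (s, -t)ᵀ`, so `(p, q)` kills it.
  obtain ⟨f, hpe⟩ : ∃ f, p * e + q * f = 0 := ⟨-(y * p * s + t - y * q * t), by
    calc _ = (1 - (p * x + q * y)) * (p * s - q * t) := by rw [he]; noncomm_ring
      _ = 0 := by rw [hxy, sub_self, zero_mul]⟩
  have he0 : e ≠ 0 := by
    rintro rfl
    have hx : x ≠ 0 := left_ne_zero_of_mul_eq_one (sub_eq_zero.mp (hc.trans (zero_mul c))).symm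
    exact hq ((mul_eq_zero.mp (hd.trans (zero_mul d))).resolve_left hx)
  have h₁ : c * x + -d * y = 0 := mul_left_cancel₀ he0 <| by
    calc e * (c * x + -d * y) = e * c * x - e * d * y := by noncomm_ring
      _ = x * (1 - (p * x + q * y)) := by rw [← hc, ← hd]; noncomm_ring
      _ = e * 0 := by rw [hxy, sub_self, mul_zero, mul_zero]
  have h₂ : c * e + -d * f = 1 := mul_left_cancel₀ he0 <| by
    calc e * (c * e + -d * f) = e * c * e - e * d * f := by noncomm_ring
      _ = e - x * (p * e + q * f) := by rw [← hc, ← hd]; noncomm_ring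
      _ = e * 1 := by rw [hpe, mul_zero, sub_zero, mul_one]
  have h₃ : y * p + f * c = 0 := mul_left_cancel₀ hq <| by
    calc q * (y * p + f * c) = q * y * p + (p * e + q * f) * c - p * (e * c) := by noncomm_ring
      _ = (p * x + q * y - 1) * p := by rw [hpe, ← hc]; noncomm_ring
      _ = q * 0 := by rw [hxy, sub_self, zero_mul, mul_zero]
  have h₄ : y * q + f * -d = 1 := mul_left_cancel₀ hq <| by
    calc q * (y * q + f * -d) = q * y * q - (p * e + q * f) * d + p * (e * d) := by noncomm_ring
      _ = (p * x + q * y) * q := by rw [hpe, ← hd]; noncomm_ring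
      _ = q * 1 := by rw [hxy, one_mul, mul_one]
  refine ⟨⟨!![p, q; c, -d], !![x, e; y, f], ?_, ?_⟩, rfl⟩
  · rw [Matrix.mul_fin_two, Matrix.one_fin_two, hxy, hpe, h₁, h₂]
  · rw [Matrix.mul_fin_two, Matrix.one_fin_two, ← hc, mul_neg, ← hd, add_sub_cancel,
      add_neg_cancel, h₃, h₄]

end

/-- In a Bézout domain, if `pR + qR = R` then `(p, q)` is the first row
of some invertible `2 × 2` matrix. -/
theorem stmt8 (R : Type*) [Ring R] [IsDomain R] (hB : IsBezoutRing R)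
    (p q : R) (h : ∃ x y : R, p * x + q * y = 1) :
    ∃ U : Matrix (Fin 2) (Fin 2) R, IsUnit U ∧ U 0 0 = p ∧ U 0 1 = q := by
  obtain ⟨x, y, hxy⟩ := h
  by_cases hq : q = 0
  · subst hq
    have hp : IsUnit ![p, 1] := Pi.isUnit_iff.mpr <| by
      simp [Fin.forall_fin_two, IsUnit.of_mul_eq_one x (by simpa using hxy)]
    exact ⟨_, hp.map (Matrix.diagonalRingHom (Fin 2) R), by simp, by simp⟩
  · obtain ⟨s, t, c, d, hc, hd⟩ := hB.exists_right_gcd (1 - x * p) (x * q)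
    exact ⟨_, isUnit_fin_two_of_right_gcd hq hxy rfl hc hd, rfl, rfl⟩
end

section
/- Let R be a Bézout duo-domain such that whenever aR + bR = R there exist x, y ∈ R with xR + yR = R, xy ∈ J(R), x ∈ aR, and y ∈ bR. Then R is an elementary divisor ring. -/
/-!
The hypothesis gives stable range 1. Write `1 = xp + yq` with `x = au`, `y = bv`, `xy ∈ J(R)`,
and put `e = xp`. Since `R` is duo, `e` is a central idempotent modulo `J(R)` and `a` is right
invertible in the corner `eRe`, so `a + b(vq(1 - a)) = (1 - e) + ea` is a unit modulo `J(R)`, hence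
a unit.

A Bézout duo domain of stable range 1 is an elementary divisor ring. By induction on the size, it
is enough to bring a matrix `A` to a form whose first row and column vanish off a corner entry that
divides every entry. Factor out a generator `d` of the right ideal of the entries, so that
`A = d • B` with `B` unimodular. Put the lower rows of `B` into this form with corner `e`. Then
unimodularity says `1 ∈ (row 0)R + eR`, and stable range 1 gives a `q` such that after adding `q`
times row 1 to row 0, the first row is unimodular (this is Kaplansky's condition). Column
operations then produce a unit in the corner.
-/

namespace IsDuoRing

variable {R : Type*} [Ring R]

theorem dvd_mul_left (hD : IsDuoRing R) (a r : R) : a ∣ r * a := by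
  obtain ⟨c, hc⟩ := Submodule.mem_span_singleton.mp
    (hD.2 _ a (Submodule.mem_span_singleton_self a) r)
  exact ⟨c.unop, hc.symm⟩

theorem exists_mul_eq_mul_left (hD : IsDuoRing R) (a r : R) : ∃ r', a * r = r' * a := by
  obtain ⟨c, hc⟩ := Submodule.mem_span_singleton.mp
    (hD.1 _ a (Submodule.mem_span_singleton_self a) r)
  exact ⟨c, hc.symm⟩

theorem dvd_mul_of_dvd_right (hD : IsDuoRing R) {a b : R} (h : a ∣ b) (r : R) : a ∣ r * b := by
  obtain ⟨c, rfl⟩ := h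
  obtain ⟨r', hr'⟩ := hD.dvd_mul_left a r
  exact ⟨r' * c, by rw [← mul_assoc, hr', mul_assoc]⟩

theorem mul_mul_mem_of_mul_mem (hD : IsDuoRing R) {I : Ideal R} {s t : R} (h : s * t ∈ I)
    (r : R) : s * r * t ∈ I := by
  obtain ⟨r', hr'⟩ := hD.dvd_mul_left t r
  rw [mul_assoc, hr', ← mul_assoc]
  exact hD.1 I _ h r'

theorem exists_mul_mul_eq_mul (hD : IsDuoRing R) {a b : R} (h : a ∣ b) (x y : R) :
    (∃ u, x * b * y = a * u) ∧ ∃ v, x * b * y = v * a := by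
  obtain ⟨u, hu⟩ := (hD.dvd_mul_of_dvd_right h x).mul_right y
  exact ⟨⟨u, hu⟩, (hD.exists_mul_eq_mul_left a u).imp fun v hv => hu.trans hv⟩

section Domain

variable [IsDomain R]

noncomputable def twist (hD : IsDuoRing R) {d : R} (hd : d ≠ 0) : R →+* R :=
  let σ x := Classical.choose (hD.exists_mul_eq_mul_left d x)
  have hσ (x : R) : σ x * d = d * x :=
    (Classical.choose_spec (hD.exists_mul_eq_mul_left d x)).symm
  { toFun := σ
    map_one' := mul_right_cancel₀ hd <| by rw [hσ, one_mul, mul_one]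
    map_mul' x y := mul_right_cancel₀ hd <| by
      rw [hσ, mul_assoc, hσ, ← mul_assoc (σ x), hσ, mul_assoc]
    map_zero' := mul_right_cancel₀ hd <| by rw [hσ, mul_zero, zero_mul]
    map_add' x y := mul_right_cancel₀ hd <| by rw [hσ, add_mul, hσ, hσ, mul_add] }

theorem twist_mul (hD : IsDuoRing R) {d : R} (hd : d ≠ 0) (x : R) :
    hD.twist hd x * d = d * x :=
  (Classical.choose_spec (hD.exists_mul_eq_mul_left d x)).symm

end Domain

end IsDuoRing

section StableRange

variable {R : Type*} [Ring R]

theorem mem_span_range_iff_exists_sum_mul {ι : Type*} [Fintype ι] {v : ι → R} {x : R} :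
    x ∈ Submodule.span Rᵐᵒᵖ (Set.range v) ↔ ∃ c : ι → R, ∑ i, v i * c i = x := by
  rw [Submodule.mem_span_range_iff_exists_fun]
  exact ⟨fun ⟨c, hc⟩ => ⟨fun i => (c i).unop, hc⟩,
    fun ⟨c, hc⟩ => ⟨fun i => MulOpposite.op (c i), hc⟩⟩

theorem mem_span_singleton_iff_dvd {a x : R} : x ∈ Submodule.span Rᵐᵒᵖ {a} ↔ a ∣ x := by
  rw [Submodule.mem_span_singleton]
  exact ⟨fun ⟨c, hc⟩ => ⟨c.unop, hc.symm⟩,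
    fun ⟨c, hc⟩ => ⟨MulOpposite.op c, hc.symm⟩⟩

theorem isUnit_of_sub_one_mem_jacobsonRadical [IsDedekindFiniteMonoid R] {r : R}
    (h : r - 1 ∈ jacobsonRadical R) : IsUnit r := by
  obtain ⟨z, hz⟩ := Ideal.mem_jacobson_iff.mp h 1
  refine IsUnit.of_mul_eq_one_right z ?_
  rw [Ideal.mem_bot, mul_one, mul_sub, mul_one, sub_add_cancel, sub_eq_zero] at hz
  exact hz

theorem hasStableRange1_of_forall_exists_mul_mem_jacobsonRadical [IsDedekindFiniteMonoid R]
    (hD : IsDuoRing R)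
    (h : ∀ a b : R, (∃ x y : R, a * x + b * y = 1) →
      ∃ x y : R, (∃ u v : R, x * u + y * v = 1) ∧ x * y ∈ jacobsonRadical R ∧
        (∃ u : R, x = a * u) ∧ (∃ v : R, y = b * v)) :
    HasStableRange1 R := by
  intro a b hab
  obtain ⟨_, _, ⟨p, q, hpq⟩, hxy, ⟨u, rfl⟩, ⟨v, rfl⟩⟩ := h a b hab
  set e := a * u * p with he
  have hbvq : b * v * q = 1 - e := eq_sub_of_add_eq' hpq
  have hef : e * (1 - e) ∈ jacobsonRadical R := by
    rw [← hbvq, show e * (b * v * q) = a * u * p * (b * v) * q by rw [he]; noncomm_ring]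
    exact hD.1 _ _ (hD.mul_mul_mem_of_mul_mem hxy p) q
  have hfe : (1 - e) * e ∈ jacobsonRadical R := by
    rwa [show (1 - e) * e = e * (1 - e) by noncomm_ring]
  have hc : a + b * (v * q * (1 - a)) = 1 - e + e * a := by
    rw [show b * (v * q * (1 - a)) = b * v * q * (1 - a) by noncomm_ring, hbvq]
    noncomm_ring
  have hcc : (1 - e + e * a) * (1 - e + u * p * e) - 1
      = -((2 + e) * (e * (1 - e))) + (1 - e) * (u * p) * e + e * a * (1 - e) := by
    rw [he]; noncomm_ring
  refine ⟨v * q * (1 - a), hc ▸ isUnit_of_mul_isUnit_left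
    (y := 1 - e + u * p * e) (isUnit_of_sub_one_mem_jacobsonRadical ?_)⟩
  rw [hcc]
  exact add_mem (add_mem (neg_mem (Ideal.mul_mem_left _ _ hef))
    (hD.mul_mul_mem_of_mul_mem hfe _)) (hD.mul_mul_mem_of_mul_mem hef _)

theorem HasStableRange1.exists_isUnit_add_mul_add_sum (hsr : HasStableRange1 R)
    (hD : IsDuoRing R) {n : ℕ} {v : Fin (n + 1) → R} {e : R}
    (h : 1 ∈ Submodule.span Rᵐᵒᵖ (Set.range v) ⊔ Submodule.span Rᵐᵒᵖ {e}) :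
    ∃ (q : R) (t : Fin n → R), IsUnit (v 0 + q * e + ∑ j, v j.succ * t j) := by
  obtain ⟨_, hx, _, hy, hxy⟩ := Submodule.mem_sup.mp h
  obtain ⟨c, rfl⟩ := mem_span_range_iff_exists_sum_mul.mp hx
  obtain ⟨z, rfl⟩ := mem_span_singleton_iff_dvd.mp hy
  rw [Fin.sum_univ_succ] at hxy
  set s := ∑ j : Fin n, v j.succ * c j.succ
  obtain ⟨w, hw⟩ := hsr (v 0) (s + e * z) ⟨c 0, 1, by rw [mul_one, ← add_assoc, hxy]⟩
  obtain ⟨q, hq⟩ := hD.exists_mul_eq_mul_left e (z * w)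
  refine ⟨q, fun j => c j.succ * w, ?_⟩
  convert hw using 1
  simp only [← mul_assoc, ← Finset.sum_mul, add_mul, mul_assoc e, hq, s]
  abel

end StableRange

namespace Matrix

variable {R : Type*} [Ring R]

section EntryIdeal

variable {l m n o : Type*}

def entryIdeal (A : Matrix m n R) : Submodule Rᵐᵒᵖ R :=
  Submodule.span Rᵐᵒᵖ (Set.range fun p : m × n => A p.1 p.2)

theorem entry_mem_entryIdeal (A : Matrix m n R) (i : m) (j : n) : A i j ∈ A.entryIdeal :=
  Submodule.subset_span ⟨(i, j), rfl⟩

theorem entryIdeal_le_span_singleton_iff {A : Matrix m n R} {a : R} :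
    A.entryIdeal ≤ Submodule.span Rᵐᵒᵖ {a} ↔ ∀ i j, a ∣ A i j := by
  simp only [entryIdeal, Submodule.span_le, Set.range_subset_iff, SetLike.mem_coe,
    mem_span_singleton_iff_dvd, Prod.forall]

theorem entryIdeal_mul_mul_le [Fintype m] [Fintype n] (hD : IsDuoRing R) (P : Matrix l m R)
    (A : Matrix m n R) (Q : Matrix n o R) : (P * A * Q).entryIdeal ≤ A.entryIdeal := by
  refine Submodule.span_le.mpr ?_
  rintro _ ⟨⟨i, j⟩, rfl⟩
  simp only [mul_apply, Finset.sum_mul]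
  refine Submodule.sum_mem _ fun k _ => Submodule.sum_mem _ fun k' _ => ?_
  exact Submodule.smul_mem _ (MulOpposite.op (Q k j))
    (hD.2 _ _ (A.entry_mem_entryIdeal k' k) (P i k'))

end EntryIdeal

section Equivalent

variable {m n : Type*} [Fintype m] [Fintype n] [DecidableEq m] [DecidableEq n]

def Equivalent (A B : Matrix m n R) : Prop :=
  ∃ (P : Matrix m m R) (Q : Matrix n n R), IsUnit P ∧ IsUnit Q ∧ P * A * Q = B

theorem Equivalent.refl (A : Matrix m n R) : A.Equivalent A :=
  ⟨1, 1, isUnit_one, isUnit_one, by rw [Matrix.one_mul, Matrix.mul_one]⟩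

theorem Equivalent.trans {A B C : Matrix m n R} (hAB : A.Equivalent B) (hBC : B.Equivalent C) :
    A.Equivalent C := by
  obtain ⟨P, Q, hP, hQ, rfl⟩ := hAB
  obtain ⟨P', Q', hP', hQ', rfl⟩ := hBC
  exact ⟨P' * P, Q * Q', hP'.mul hP, hQ.mul hQ', by simp only [Matrix.mul_assoc]⟩

theorem Equivalent.symm {A B : Matrix m n R} (h : A.Equivalent B) : B.Equivalent A := by
  obtain ⟨_, _, ⟨P, rfl⟩, ⟨Q, rfl⟩, rfl⟩ := h
  refine ⟨↑P⁻¹, ↑Q⁻¹, Units.isUnit _, Units.isUnit _, ?_⟩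
  simp only [← Matrix.mul_assoc, Units.inv_mul, Matrix.one_mul]
  simp only [Matrix.mul_assoc, Units.mul_inv, Matrix.mul_one]

theorem equivalent_mul_left {P : Matrix m m R} (hP : IsUnit P) (A : Matrix m n R) :
    A.Equivalent (P * A) :=
  ⟨P, 1, hP, isUnit_one, Matrix.mul_one _⟩

theorem equivalent_mul_right {Q : Matrix n n R} (hQ : IsUnit Q) (A : Matrix m n R) :
    A.Equivalent (A * Q) :=
  ⟨1, Q, isUnit_one, hQ, by rw [Matrix.one_mul]⟩

theorem Equivalent.entryIdeal_le (hD : IsDuoRing R) {A B : Matrix m n R} (h : A.Equivalent B) :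
    B.entryIdeal ≤ A.entryIdeal := by
  obtain ⟨P, Q, -, -, rfl⟩ := h
  exact entryIdeal_mul_mul_le hD P A Q

theorem Equivalent.smul [IsDomain R] (hD : IsDuoRing R) {d : R} (hd : d ≠ 0) {A B : Matrix m n R}
    (h : A.Equivalent B) : (d • A).Equivalent (d • B) := by
  obtain ⟨P, Q, hP, hQ, rfl⟩ := h
  refine ⟨P.map (hD.twist hd), Q, hP.map (hD.twist hd).mapMatrix, hQ, ?_⟩
  have hPA : P.map (hD.twist hd) * (d • A) = d • (P * A) := by
    ext i j
    simp only [mul_apply, smul_apply, smul_eq_mul, map_apply, Finset.mul_sum, ← mul_assoc,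
      hD.twist_mul]
  rw [hPA, Matrix.smul_mul]

end Equivalent

section Transvections

variable {m n : Type*} [Fintype m] [DecidableEq m]

theorem isUnit_one_add_vecMulVec {w v : m → R} (h : v ⬝ᵥ w = 0) :
    IsUnit (1 + vecMulVec w v) :=
  IsNilpotent.isUnit_one_add
    ⟨2, by rw [pow_two, vecMulVec_mul_vecMulVec, h, zero_smul, vecMulVec_zero]⟩

theorem one_add_vecMulVec_single_mul_apply (w : m → R) (k : m) (M : Matrix m n R) (i : m)
    (j : n) : ((1 + vecMulVec w (Pi.single k 1) : Matrix m m R) * M) i j =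
      M i j + w i * M k j := by
  simp [Matrix.add_mul, vecMulVec_mul, vecMulVec_apply]

theorem mul_one_add_vecMulVec_single_apply (w : m → R) (k : m) (M : Matrix n m R) (i : n)
    (j : m) : (M * (1 + vecMulVec (Pi.single k 1) w : Matrix m m R)) i j =
      M i j + M i k * w j := by
  simp [Matrix.mul_add, mul_vecMulVec, vecMulVec_apply]

theorem mul_one_add_vecMulVec_single_apply_same (w : m → R) (k : m) (M : Matrix n m R)
    (i : n) : (M * (1 + vecMulVec w (Pi.single k 1) : Matrix m m R)) i k =
      M i k + (M *ᵥ w) i := by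
  simp [Matrix.mul_add, mul_vecMulVec, vecMulVec_apply]

end Transvections

section Pivot

variable {m n : ℕ}

def consDiag (a : R) (D : Matrix (Fin m) (Fin n) R) : Matrix (Fin (m + 1)) (Fin (n + 1)) R :=
  of (Fin.cons (Fin.cons a 0) fun i => Fin.cons 0 (D i))

@[simp] theorem consDiag_zero_zero (a : R) (D : Matrix (Fin m) (Fin n) R) :
    consDiag a D 0 0 = a := rfl

@[simp] theorem consDiag_zero_succ (a : R) (D : Matrix (Fin m) (Fin n) R) (j : Fin n) :
    consDiag a D 0 j.succ = 0 := rfl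

@[simp] theorem consDiag_succ_zero (a : R) (D : Matrix (Fin m) (Fin n) R) (i : Fin m) :
    consDiag a D i.succ 0 = 0 := rfl

@[simp] theorem consDiag_succ_succ (a : R) (D : Matrix (Fin m) (Fin n) R) (i : Fin m)
    (j : Fin n) : consDiag a D i.succ j.succ = D i j := rfl

theorem consDiag_mul_consDiag {k : ℕ} (a b : R) (C : Matrix (Fin m) (Fin k) R)
    (D : Matrix (Fin k) (Fin n) R) : consDiag a C * consDiag b D = consDiag (a * b) (C * D) := by
  ext i j
  refine Fin.cases ?_ (fun i => ?_) i <;> refine Fin.cases ?_ (fun j => ?_) j <;>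
    simp [mul_apply, Fin.sum_univ_succ]

theorem consDiag_one_one : consDiag 1 (1 : Matrix (Fin m) (Fin m) R) = 1 := by
  ext i j
  refine Fin.cases ?_ (fun i => ?_) i <;> refine Fin.cases ?_ (fun j => ?_) j <;>
    simp [one_apply, fun j : Fin m => (Fin.succ_ne_zero j).symm]

theorem isUnit_consDiag_one {P : Matrix (Fin m) (Fin m) R} (hP : IsUnit P) :
    IsUnit (consDiag 1 P) := by
  let f : Matrix (Fin m) (Fin m) R →* Matrix (Fin (m + 1)) (Fin (m + 1)) R :=
    { toFun := consDiag 1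
      map_one' := consDiag_one_one
      map_mul' P Q := by rw [consDiag_mul_consDiag, one_mul] }
  exact hP.map f

theorem consDiag_one_mul_apply_succ {k : ℕ} (P : Matrix (Fin m) (Fin m) R)
    (B : Matrix (Fin (m + 1)) (Fin k) R) (i : Fin m) (j : Fin k) :
    (consDiag 1 P * B) i.succ j = (P * B.submatrix Fin.succ id) i j := by
  simp [mul_apply, Fin.sum_univ_succ]

theorem Equivalent.consDiag (a : R) {C D : Matrix (Fin m) (Fin n) R} (h : C.Equivalent D) :
    (consDiag a C).Equivalent (consDiag a D) := by
  obtain ⟨P, Q, hP, hQ, rfl⟩ := h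
  exact ⟨_, _, isUnit_consDiag_one hP, isUnit_consDiag_one hQ, by
    rw [consDiag_mul_consDiag, consDiag_mul_consDiag, one_mul, mul_one]⟩

def IsPivotForm (N : Matrix (Fin (m + 1)) (Fin (n + 1)) R) : Prop :=
  (∀ j : Fin n, N 0 j.succ = 0) ∧ (∀ i : Fin m, N i.succ 0 = 0) ∧ ∀ i j, N 0 0 ∣ N i j

theorem IsPivotForm.eq_consDiag {N : Matrix (Fin (m + 1)) (Fin (n + 1)) R} (hN : IsPivotForm N) :
    N = consDiag (N 0 0) (N.submatrix Fin.succ Fin.succ) := by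
  ext i j
  refine Fin.cases ?_ (fun i => ?_) i <;> refine Fin.cases ?_ (fun j => ?_) j <;>
    simp [hN.1, hN.2.1]

def IsSmithForm (D : Matrix (Fin m) (Fin n) R) : Prop :=
  (∀ (i : Fin m) (j : Fin n), (i : ℕ) ≠ j → D i j = 0) ∧
    ∀ k (hm : k + 1 < m) (hn : k + 1 < n),
      D ⟨k, by omega⟩ ⟨k, by omega⟩ ∣ D ⟨k + 1, hm⟩ ⟨k + 1, hn⟩

theorem IsSmithForm.consDiag {a : R} {D : Matrix (Fin m) (Fin n) R} (hD : IsSmithForm D)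
    (ha : ∀ i j, a ∣ D i j) : IsSmithForm (consDiag a D) := by
  refine ⟨fun i j hij => ?_, fun k hm hn => ?_⟩
  · cases i using Fin.cases <;> cases j using Fin.cases
    · exact absurd rfl hij
    · rfl
    · rfl
    · exact hD.1 _ _ (by simpa using hij)
  · cases k with
    | zero => exact ha _ _
    | succ k => exact hD.2 k (by omega) (by omega)

theorem exists_equivalent_isPivotForm_of_isUnit {M : Matrix (Fin (m + 1)) (Fin (n + 1)) R}
    (hM : IsUnit (M 0 0)) : ∃ N, M.Equivalent N ∧ IsPivotForm N := by
  obtain ⟨u, hu⟩ := hM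
  set M' := M * (1 + vecMulVec (Pi.single 0 1) (Fin.cons 0 fun j => -(↑u⁻¹ * M 0 j.succ)) :
    Matrix (Fin (n + 1)) (Fin (n + 1)) R)
  have hM'00 : M' 0 0 = u := by simp [M', mul_one_add_vecMulVec_single_apply, hu]
  have hM'0succ (j : Fin n) : M' 0 j.succ = 0 := by
    simp [M', mul_one_add_vecMulVec_single_apply, ← hu]
  set N := (1 + vecMulVec (Fin.cons 0 fun i => -(M' i.succ 0 * ↑u⁻¹)) (Pi.single 0 1) :
    Matrix (Fin (m + 1)) (Fin (m + 1)) R) * M'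
  have hN00 : N 0 0 = u := by simp [N, one_add_vecMulVec_single_mul_apply, hM'00]
  refine ⟨N, (equivalent_mul_right (isUnit_one_add_vecMulVec ?_) M).trans
    (equivalent_mul_left (isUnit_one_add_vecMulVec ?_) M'), fun j => ?_, fun i => ?_, ?_⟩
  · simp
  · simp
  · simp [N, one_add_vecMulVec_single_mul_apply, hM'0succ]
  · simp [N, one_add_vecMulVec_single_mul_apply, hM'00]
  · intro i j
    rw [hN00]
    exact Units.coe_dvd

theorem exists_equivalent_isPivotForm_of_isUnit_add_sum
    (M : Matrix (Fin (m + 1)) (Fin (n + 1)) R) (t : Fin n → R)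
    (h : IsUnit (M 0 0 + ∑ j, M 0 j.succ * t j)) : ∃ N, M.Equivalent N ∧ IsPivotForm N := by
  set Q := (1 + vecMulVec (Fin.cons 0 t) (Pi.single 0 1) : Matrix (Fin (n + 1)) (Fin (n + 1)) R)
  obtain ⟨N, hN, hpiv⟩ := exists_equivalent_isPivotForm_of_isUnit (M := M * Q) <| by
    simpa [Q, mul_one_add_vecMulVec_single_apply_same, mulVec, dotProduct, Fin.sum_univ_succ]
      using h
  exact ⟨N, (equivalent_mul_right
    (isUnit_one_add_vecMulVec (by simp)) M).trans hN, hpiv⟩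

section Unimodular

variable (hsr : HasStableRange1 R) (hD : IsDuoRing R)
include hsr hD

theorem exists_equivalent_isPivotForm_of_unimodular_row (B : Matrix (Fin 1) (Fin (n + 1)) R)
    (hB : 1 ∈ B.entryIdeal) : ∃ N, B.Equivalent N ∧ IsPivotForm N := by
  have h1 : 1 ∈ Submodule.span Rᵐᵒᵖ (Set.range (B 0)) ⊔ Submodule.span Rᵐᵒᵖ {0} := by
    refine Submodule.mem_sup_left (Submodule.span_mono ?_ hB)
    rintro _ ⟨⟨i, j⟩, rfl⟩
    exact ⟨j, by rw [Subsingleton.elim i 0]⟩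
  obtain ⟨q, t, hu⟩ := hsr.exists_isUnit_add_mul_add_sum hD h1
  rw [mul_zero, add_zero] at hu
  exact exists_equivalent_isPivotForm_of_isUnit_add_sum B t hu

theorem exists_equivalent_isPivotForm_of_unimodular_succ
    (ih : ∀ A : Matrix (Fin (m + 1)) (Fin (n + 1)) R, ∃ N, A.Equivalent N ∧ IsPivotForm N)
    (B : Matrix (Fin (m + 2)) (Fin (n + 1)) R) (hB : 1 ∈ B.entryIdeal) :
    ∃ N, B.Equivalent N ∧ IsPivotForm N := by
  obtain ⟨_, ⟨P, Q, hP, hQ, rfl⟩, hN⟩ := ih (B.submatrix Fin.succ id)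
  set M := consDiag 1 P * (B * Q)
  have hBM : B.Equivalent M :=
    (equivalent_mul_right hQ B).trans (equivalent_mul_left (isUnit_consDiag_one hP) _)
  have hMsucc (i : Fin (m + 1)) (j : Fin (n + 1)) :
      M i.succ j = (P * B.submatrix Fin.succ id * Q) i j := by
    rw [show M i.succ j = _ from consDiag_one_mul_apply_succ P (B * Q) i j, Matrix.mul_assoc]
    rfl
  have h1 : 1 ∈ Submodule.span Rᵐᵒᵖ (Set.range (M 0)) ⊔
      Submodule.span Rᵐᵒᵖ {M (Fin.succ 0) 0} := by
    refine Submodule.span_le.mpr ?_ (hBM.symm.entryIdeal_le hD hB)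
    rintro _ ⟨⟨i, j⟩, rfl⟩
    cases i using Fin.cases with
    | zero => exact Submodule.mem_sup_left (Submodule.subset_span ⟨j, rfl⟩)
    | succ i =>
      refine Submodule.mem_sup_right (mem_span_singleton_iff_dvd.mpr ?_)
      simpa only [hMsucc] using hN.2.2 i j
  obtain ⟨q, t, hu⟩ := hsr.exists_isUnit_add_mul_add_sum hD h1
  set T := (1 + vecMulVec (Pi.single 0 q) (Pi.single (Fin.succ 0) 1) :
    Matrix (Fin (m + 2)) (Fin (m + 2)) R)
  obtain ⟨N, hMN, hpiv⟩ := exists_equivalent_isPivotForm_of_isUnit_add_sum (T * M) t <| by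
    have hM1 (j : Fin n) : M 1 j.succ = 0 := by
      rw [← Fin.succ_zero_eq_one, hMsucc]
      exact hN.1 j
    simpa [T, one_add_vecMulVec_single_mul_apply, hM1] using hu
  exact ⟨N, hBM.trans ((equivalent_mul_left (isUnit_one_add_vecMulVec (by simp)) M).trans hMN),
    hpiv⟩

end Unimodular

end Pivot

section SmithForm

variable [IsDomain R] (hB : IsBezoutRing R) (hD : IsDuoRing R)
include hB hD

theorem exists_equivalent_isPivotForm_of_forall_unimodular {m n : ℕ}
    (H : ∀ B : Matrix (Fin (m + 1)) (Fin (n + 1)) R, 1 ∈ B.entryIdeal →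
      ∃ N, B.Equivalent N ∧ IsPivotForm N)
    (A : Matrix (Fin (m + 1)) (Fin (n + 1)) R) : ∃ N, A.Equivalent N ∧ IsPivotForm N := by
  obtain ⟨d, hd⟩ := hB.2 A.entryIdeal (Submodule.fg_span (Set.finite_range _))
  choose b hb using entryIdeal_le_span_singleton_iff.mp hd.le
  by_cases hd0 : d = 0
  · have hA (i j) : A i j = 0 := by rw [hb, hd0, zero_mul]
    exact ⟨A, .refl A, fun j => hA _ _, fun i => hA _ _, fun i j => hA i j ▸ dvd_zero _⟩
  have h1 : 1 ∈ (of b).entryIdeal := by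
    obtain ⟨c, hc⟩ := mem_span_range_iff_exists_sum_mul.mp
      (hd ▸ Submodule.mem_span_singleton_self d : d ∈ A.entryIdeal)
    refine mem_span_range_iff_exists_sum_mul.mpr ⟨c, mul_left_cancel₀ hd0 ?_⟩
    conv_rhs => rw [mul_one, ← hc]
    simp only [Finset.mul_sum, hb, of_apply, mul_assoc]
  obtain ⟨N, hN, hpiv⟩ := H _ h1
  have hA : A = d • of b := by
    ext i j
    exact hb i j
  refine ⟨d • N, hA ▸ hN.smul hD hd0, fun j => ?_, fun i => ?_, fun i j => ?_⟩
  · simp [hpiv.1]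
  · simp [hpiv.2.1]
  · exact mul_dvd_mul_left d (hpiv.2.2 i j)

variable (hsr : HasStableRange1 R)
include hsr

theorem exists_equivalent_isPivotForm {n : ℕ} :
    ∀ {m : ℕ} (A : Matrix (Fin (m + 1)) (Fin (n + 1)) R),
      ∃ N, A.Equivalent N ∧ IsPivotForm N
  | 0, A => exists_equivalent_isPivotForm_of_forall_unimodular hB hD
      (exists_equivalent_isPivotForm_of_unimodular_row hsr hD) A
  | _ + 1, A => exists_equivalent_isPivotForm_of_forall_unimodular hB hD
      (exists_equivalent_isPivotForm_of_unimodular_succ hsr hD exists_equivalent_isPivotForm) A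

theorem exists_equivalent_isSmithForm :
    ∀ {m n : ℕ} (A : Matrix (Fin m) (Fin n) R), ∃ D, A.Equivalent D ∧ IsSmithForm D
  | 0, _, A => ⟨A, .refl A, fun i => i.elim0, fun _ hm => by omega⟩
  | _ + 1, 0, A => ⟨A, .refl A, fun _ j => j.elim0, fun _ _ hn => by omega⟩
  | _ + 1, _ + 1, A => by
    obtain ⟨N, hAN, hN⟩ := exists_equivalent_isPivotForm hB hD hsr A
    obtain ⟨D, hCD, hS⟩ := exists_equivalent_isSmithForm (N.submatrix Fin.succ Fin.succ)
    have hND := hCD.consDiag (N 0 0)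
    rw [← hN.eq_consDiag] at hND
    refine ⟨_, hAN.trans hND, hS.consDiag (entryIdeal_le_span_singleton_iff.mp ?_)⟩
    exact (hCD.entryIdeal_le hD).trans
      (entryIdeal_le_span_singleton_iff.mpr fun i j => hN.2.2 i.succ j.succ)

end SmithForm

end Matrix

/-- If `R` is a Bézout duo-domain such that whenever `aR + bR = R`
there are `x, y` with `xR + yR = R`, `xy ∈ J(R)`, `x ∈ aR` and `y ∈ bR`, then `R` is an
elementary divisor ring. -/
theorem stmt11 (R : Type*) [Ring R] [IsDomain R]
    (hB : IsBezoutRing R) (hD : IsDuoRing R)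
    (h : ∀ a b : R, (∃ x y : R, a * x + b * y = 1) →
      ∃ x y : R, (∃ u v : R, x * u + y * v = 1) ∧ x * y ∈ jacobsonRadical R ∧
        (∃ u : R, x = a * u) ∧ (∃ v : R, y = b * v)) :
    ElementaryDivisorRing R := by
  intro m n A
  obtain ⟨_, ⟨P, Q, hP, hQ, rfl⟩, hdiag, hdvd⟩ := Matrix.exists_equivalent_isSmithForm hB hD
    (hasStableRange1_of_forall_exists_mul_mem_jacobsonRadical hD h) A
  refine ⟨P, Q, hP, hQ, hdiag, ?_⟩
  rintro ⟨k, _⟩ ⟨_, _⟩ ⟨_, hm⟩ ⟨_, hn⟩ rfl rfl rfl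
  exact hD.exists_mul_mul_eq_mul (hdvd k hm hn)
end

section
/- Let R be a Bézout duo-domain. Then every feckly adequate element of R is stable, i.e., if c ∈ R is feckly adequate then R/cR has stable range 1. -/
/-!
Lift the unimodular row `(ā, b̄)` of `R/cR` to `ax + by + cz = 1` and apply feckly adequacy to `a`,
getting `c ≡ rs (mod J)` with `rR + aR = R`. The candidate is `g = a + byr`. Modulo `r` it is `a`,
so `gR + rR = R`. If `gR + sR = dR` with `d` a non-unit, then `d` is a non-unit divisor of `s`,
so `d` and `a` lie in a maximal ideal `M`, which is two-sided and completely prime because `R` is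
duo; then `byr ∈ M`, and both `r ∈ M` and `by ∈ M` (whence `c ∈ M`) contradict comaximality.
Hence `gR + rsR = R`, and since `c - rs ∈ J`, also `gR + cR = R`, i.e. `g` is a unit mod `c`.
-/

section

variable {R : Type*} [Ring R]

/-- `aR + bR = R`. -/
def RightComaximal (a b : R) : Prop := ∃ x y : R, a * x + b * y = 1

theorem isUnit_one_add_of_mem_jacobsonRadical {m : R} (hm : m ∈ jacobsonRadical R) :
    IsUnit (1 + m) := by
  have left_inv : ∀ n ∈ jacobsonRadical R, ∃ k, k * (1 + n) = 1 := fun n hn => by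
    obtain ⟨k, hk⟩ := Ideal.exists_mul_add_sub_mem_of_mem_jacobson n hn
    exact ⟨k, by rw [add_comm 1 n]; simpa [sub_eq_zero] using hk⟩
  obtain ⟨k, hk⟩ := left_inv m hm
  -- `k = 1 - k m` is again of the form `1 + j` with `j ∈ J`, so it has a left inverse `k'`,
  -- which must be `1 + m`.
  obtain ⟨k', hk'⟩ := left_inv (-(k * m)) (neg_mem (Ideal.mul_mem_left _ k hm))
  have hk'k : k' * k = 1 := by
    rw [← hk']; congr 1; rw [← hk]; noncomm_ring
  have hk'_eq : k' = 1 + m :=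
    calc k' = k' * (k * (1 + m)) := by rw [hk, mul_one]
      _ = 1 + m := by rw [← mul_assoc, hk'k, one_mul]
  exact ⟨⟨1 + m, k, hk'_eq ▸ hk'k, hk⟩, rfl⟩

namespace RightComaximal

variable {a b g r : R}

theorem symm (h : RightComaximal a b) : RightComaximal b a :=
  let ⟨x, y, hxy⟩ := h
  ⟨y, x, by rw [add_comm, hxy]⟩

theorem add_mul_right (h : RightComaximal a r) (t : R) : RightComaximal (a + r * t) r := by
  obtain ⟨x, y, hxy⟩ := h
  exact ⟨x, y - t * x, by rw [← hxy]; noncomm_ring⟩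

theorem of_sub_mem_jacobsonRadical {d c : R} (h : RightComaximal g d)
    (hcd : c - d ∈ jacobsonRadical R) : RightComaximal g c := by
  obtain ⟨x, y, hxy⟩ := h
  obtain ⟨ε, hε⟩ := isUnit_one_add_of_mem_jacobsonRadical (Ideal.mul_mem_right y _ hcd)
  refine ⟨x * ↑ε⁻¹, y * ↑ε⁻¹, ?_⟩
  calc g * (x * ↑ε⁻¹) + c * (y * ↑ε⁻¹) = (g * x + d * y + (c - d) * y) * ↑ε⁻¹ := by noncomm_ring
    _ = 1 := by rw [hxy, ← hε, ε.mul_inv]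

end RightComaximal

namespace IsDuoRing

variable (hD : IsDuoRing R)
include hD

theorem exists_mul_eq_mul_right (p q : R) : ∃ q', q * p = p * q' := by
  obtain ⟨α, hα⟩ := Submodule.mem_span_singleton.mp
    (hD.2 (Submodule.span Rᵐᵒᵖ {p}) p (Submodule.mem_span_singleton_self p) q)
  exact ⟨α.unop, by simpa [MulOpposite.smul_eq_mul_unop] using hα.symm⟩

theorem exists_mul_eq_mul_left_s13 (p q : R) : ∃ q', p * q = q' * p := by
  obtain ⟨α, hα⟩ := Ideal.mem_span_singleton'.mp
    (hD.1 (Ideal.span {p}) p (Ideal.mem_span_singleton_self p) q)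
  exact ⟨α, hα.symm⟩

theorem mem_span_singleton {c w : R} : w ∈ TwoSidedIdeal.span {c} ↔ c ∣ w := by
  refine ⟨fun hw => ?_, fun ⟨z, hz⟩ => hz ▸ TwoSidedIdeal.mul_mem_right _ c z
    (TwoSidedIdeal.subset_span rfl)⟩
  let I : TwoSidedIdeal R := TwoSidedIdeal.mk' {w | c ∣ w} (dvd_zero c)
    (fun hx hy => dvd_add hx hy) (fun hx => (dvd_neg).2 hx)
    (fun {x y} ⟨z, hz⟩ => by
      obtain ⟨x', hx'⟩ := hD.exists_mul_eq_mul_right c x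
      exact ⟨x' * z, by rw [hz, ← mul_assoc, hx', mul_assoc]⟩)
    (fun hx => dvd_mul_of_dvd_left hx _)
  have : w ∈ I := TwoSidedIdeal.mem_span_iff.mp hw I (by simp [I])
  simpa [I] using this

theorem coe_eq_one_iff {c w : R} : (w : QuotBy c) = 1 ↔ ∃ z, w + c * z = 1 := by
  rw [← RingCon.coe_one, RingCon.eq, TwoSidedIdeal.rel_iff, hD.mem_span_singleton]
  refine ⟨fun ⟨z, hz⟩ => ⟨-z, ?_⟩, fun ⟨z, hz⟩ => ⟨-z, ?_⟩⟩
  · rw [mul_neg, ← hz]; abel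
  · rw [mul_neg, ← hz]; abel

theorem isUnit_coe_of_rightComaximal {c g : R} (h : RightComaximal g c) :
    IsUnit (g : QuotBy c) := by
  obtain ⟨u, v, huv⟩ := h
  obtain ⟨u', hu'⟩ := hD.exists_mul_eq_mul_left_s13 g u
  obtain ⟨v', hv'⟩ := hD.exists_mul_eq_mul_left_s13 c v
  have hc : (c : QuotBy c) = 0 := by
    rw [← RingCon.coe_zero, RingCon.eq, TwoSidedIdeal.rel_iff, sub_zero]
    exact TwoSidedIdeal.subset_span rfl
  have right_inv : (g : QuotBy c) * u = 1 := by
    simpa [hc] using congrArg ((↑) : R → QuotBy c) huv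
  have left_inv : (u' : QuotBy c) * g = 1 := by
    rw [hu', hv'] at huv
    simpa [hc] using congrArg ((↑) : R → QuotBy c) huv
  rw [← left_inv_eq_right_inv left_inv right_inv] at right_inv
  exact ⟨⟨_, _, right_inv, left_inv⟩, rfl⟩

theorem mem_or_mem_of_mul_mem {M : Ideal R} (hM : M.IsMaximal) {p q : R} (hpq : p * q ∈ M) :
    p ∈ M ∨ q ∈ M := by
  refine or_iff_not_imp_right.2 fun hq => ?_
  obtain ⟨γ, m, hm, hγ⟩ := hM.exists_inv hq
  obtain ⟨γ', hγ'⟩ := hD.exists_mul_eq_mul_left_s13 p γ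
  have : p = p * m + γ' * (p * q) := by
    calc p = p * (γ * q + m) := by rw [hγ, mul_one]
    _ = p * m + (p * γ) * q := by noncomm_ring
    _ = p * m + γ' * (p * q) := by rw [hγ', mul_assoc]
  rw [this]
  exact M.add_mem (M.mul_mem_left p hm) (M.mul_mem_left γ' hpq)

theorem exists_isMaximal_of_not_rightComaximal {a b : R} (h : ¬RightComaximal a b) :
    ∃ M : Ideal R, M.IsMaximal ∧ a ∈ M ∧ b ∈ M := by
  have hne : Ideal.span {a, b} ≠ ⊤ := fun htop => h <| by
    obtain ⟨α, β, hαβ⟩ := Ideal.mem_span_pair.mp ((Ideal.eq_top_iff_one _).mp htop)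
    obtain ⟨α', hα'⟩ := hD.exists_mul_eq_mul_right a α
    obtain ⟨β', hβ'⟩ := hD.exists_mul_eq_mul_right b β
    exact ⟨α', β', by rw [← hα', ← hβ', hαβ]⟩
  obtain ⟨M, hM, hle⟩ := Ideal.exists_le_maximal _ hne
  exact ⟨M, hM, hle (Ideal.subset_span (by simp)), hle (Ideal.subset_span (by simp))⟩

theorem rightComaximal_mul {g r s : R} (hr : RightComaximal g r) (hs : RightComaximal g s) :
    RightComaximal g (r * s) := by
  obtain ⟨x, y, hxy⟩ := hr
  obtain ⟨x', y', hxy'⟩ := hs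
  obtain ⟨h, hh⟩ := hD.exists_mul_eq_mul_right g (r * y)
  obtain ⟨y'', hy''⟩ := hD.exists_mul_eq_mul_right s y
  refine ⟨x + h * x', y'' * y', ?_⟩
  calc g * (x + h * x') + r * s * (y'' * y') = g * x + (g * h) * x' + r * (s * y'') * y' := by
        noncomm_ring
    _ = g * x + r * y * (g * x' + s * y') := by rw [← hh, ← hy'']; noncomm_ring
    _ = 1 := by rw [hxy', mul_one, hxy]

end IsDuoRing

theorem IsBezoutRing.rightComaximal_or_exists_nonunit_dvd (hB : IsBezoutRing R) (g s : R) :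
    RightComaximal g s ∨ ∃ d, ¬IsUnit d ∧ d ∣ g ∧ d ∣ s := by
  have mem_span_iff_dvd : ∀ {d w : R}, w ∈ Submodule.span Rᵐᵒᵖ {d} ↔ d ∣ w := by
    intro d w
    rw [Submodule.mem_span_singleton]
    exact ⟨fun ⟨α, hα⟩ => ⟨α.unop, by simpa [MulOpposite.smul_eq_mul_unop] using hα.symm⟩,
      fun ⟨u, hu⟩ => ⟨MulOpposite.op u, by simp [MulOpposite.smul_eq_mul_unop, hu]⟩⟩
  obtain ⟨d, hd⟩ := hB.2 _ (Submodule.fg_span ((Set.finite_singleton s).insert g))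
  have hdg : d ∣ g := mem_span_iff_dvd.1 (hd ▸ Submodule.subset_span (by simp))
  have hds : d ∣ s := mem_span_iff_dvd.1 (hd ▸ Submodule.subset_span (by simp))
  refine (em (IsUnit d)).imp (fun ⟨δ, hδ⟩ => ?_) fun hdu => ⟨d, hdu, hdg, hds⟩
  obtain ⟨α, β, hαβ⟩ := Submodule.mem_span_pair.mp (hd ▸ Submodule.mem_span_singleton_self d)
  refine ⟨α.unop * ↑δ⁻¹, β.unop * ↑δ⁻¹, ?_⟩
  simp only [MulOpposite.smul_eq_mul_unop] at hαβ
  rw [← mul_assoc, ← mul_assoc, ← add_mul, hαβ, ← hδ, δ.mul_inv]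

theorem rightComaximal_add_mul_of_adequate_factor (hB : IsBezoutRing R) (hD : IsDuoRing R)
    {a b c r s x y z : R} (hxyz : a * x + b * y + c * z = 1) (hj : c - r * s ∈ jacobsonRadical R)
    (hra : RightComaximal r a) (hs : ∀ s', ¬IsUnit s' → s' ∣ s → ¬RightComaximal s' a) :
    RightComaximal (a + b * (y * r)) s := by
  refine (hB.rightComaximal_or_exists_nonunit_dvd _ s).resolve_right ?_
  rintro ⟨d, hd, hdg, hds⟩
  obtain ⟨M, hM, hdM, haM⟩ := hD.exists_isMaximal_of_not_rightComaximal (hs d hd hds)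
  have mem_of_dvd : ∀ {w}, d ∣ w → w ∈ M := fun ⟨u, hu⟩ => hu ▸ hD.1 M d hdM u
  have hsM : s ∈ M := mem_of_dvd hds
  have hbyr : b * y * r ∈ M := by
    simpa [mul_assoc] using M.sub_mem (mem_of_dvd hdg) haM
  apply hM.ne_top
  rw [Ideal.eq_top_iff_one]
  rcases hD.mem_or_mem_of_mul_mem hM hbyr with hby | hrM
  · have hcM : c ∈ M := by
      simpa using M.add_mem ((sInf_le ⟨bot_le, hM⟩ : jacobsonRadical R ≤ M) hj)
        (M.mul_mem_left r hsM)
    rw [← hxyz]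
    exact M.add_mem (M.add_mem (hD.1 M a haM x) hby) (hD.1 M c hcM z)
  · obtain ⟨x', y', hxy'⟩ := hra
    rw [← hxy']
    exact M.add_mem (hD.1 M r hrM x') (hD.1 M a haM y')

theorem IsFecklyAdequateElement.exists_rightComaximal_add_mul (hB : IsBezoutRing R)
    (hD : IsDuoRing R) {c a b x y z : R} (hc : IsFecklyAdequateElement c)
    (hxyz : a * x + b * y + c * z = 1) : ∃ t, RightComaximal (a + b * t) c := by
  obtain ⟨r, s, hj, hra, hs⟩ := hc a
  refine ⟨y * r, ?_⟩
  have hr : RightComaximal (a + b * (y * r)) r := by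
    obtain ⟨t, ht⟩ := hD.exists_mul_eq_mul_right r (b * y)
    rw [← mul_assoc, ht]
    exact (RightComaximal.symm hra).add_mul_right t
  exact (hD.rightComaximal_mul hr
    (rightComaximal_add_mul_of_adequate_factor hB hD hxyz hj hra hs)).of_sub_mem_jacobsonRadical hj

end

theorem stmt13_general (R : Type*) [Ring R]
    (hB : IsBezoutRing R) (hD : IsDuoRing R)
    (c : R) (hc : IsFecklyAdequateElement c) :
    HasStableRange1 (QuotBy c) := by
  rintro A B ⟨X, Y, hXY⟩
  induction A using Quotient.inductionOn' with | h a => ?_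
  induction B using Quotient.inductionOn' with | h b => ?_
  induction X using Quotient.inductionOn' with | h x => ?_
  induction Y using Quotient.inductionOn' with | h y => ?_
  obtain ⟨z, hz⟩ := hD.coe_eq_one_iff.1 hXY
  obtain ⟨t, ht⟩ := hc.exists_rightComaximal_add_mul hB hD hz
  exact ⟨t, hD.isUnit_coe_of_rightComaximal ht⟩

/-- In a Bézout duo-domain, every feckly adequate element `c` is stable,
i.e., `R/cR` has stable range 1. -/
theorem stmt13 (R : Type*) [Ring R] [IsDomain R]
    (hB : IsBezoutRing R) (hD : IsDuoRing R)
    (c : R) (hc : IsFecklyAdequateElement c) :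
    HasStableRange1 (QuotBy c) :=
  stmt13_general R hB hD c hc
end
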